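/- Assume m is even. Then any two pairs (β,σ), (β',σ') of elements of K with β² = β'² = 1 and σ^{gcd(n,n−2)} = σ'^{gcd(n,n−2)} = 1 satisfy (β,σ) ~ (β',σ'). Consequently ~ has exactly one equivalence class whenever m is even, regardless of the parity of n. -/

import Mathlib

/-- The set of parameter pairs `(β, σ)` with `β² = 1` and `σ^{gcd(n, n-2)} = 1`. -/
def taftSet (K : Type*) [Field K] (n : ℕ) : Set (K × K) :=
  {p | p.1 ^ 2 = 1 ∧ p.2 ^ Nat.gcd n (n - 2) = 1}

/-- `(β, σ) ~ (β', σ')` iff there exist `f, F ∈ {0,…,m-1}` and `s, t ∈ {0,…,n-1}` with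
`gcd(t, n) = 1`, `m ∣ 2f`, `m ∣ nF`, `m ∣ 2F`, `q^f = β·β'·σ'^s` and `q^F = σ·σ'^t`. -/
def taftRel {K : Type*} [Field K] (m n : ℕ) (q : K) (p p' : K × K) : Prop :=
  ∃ f F s t : ℕ, f ≤ m - 1 ∧ F ≤ m - 1 ∧ s ≤ n - 1 ∧ t ≤ n - 1 ∧
    Nat.gcd t n = 1 ∧ m ∣ 2 * f ∧ m ∣ n * F ∧ m ∣ 2 * F ∧
    q ^ f = p.1 * p'.1 * p'.2 ^ s ∧ q ^ F = p.2 * p'.2 ^ t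

/-!
Since `m` is even, `q ^ (m / 2) = -1`, and because `gcd(n, n - 2)` divides `2`, both `β β'`
and `σ σ'` are `±1`. Hence `s = 0`, `t = 1` and `f, F ∈ {0, m / 2}` always work; the condition
`m ∣ n F` is harmless because `σ σ' = -1` can only happen for even `n` (for odd `n`,
`gcd(n, n - 2) = 1` forces `σ = σ' = 1`).
-/

theorem Set.setOf_exists_eq_sep_eq_singleton {α : Type*} {S : Set α} {r : α → α → Prop}
    (hS : S.Nonempty) (hr : ∀ p ∈ S, ∀ p' ∈ S, r p p') :
    {C : Set α | ∃ p ∈ S, C = {p' ∈ S | r p p'}} = {S} := by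
  have hclass : ∀ p ∈ S, {p' ∈ S | r p p'} = S := fun p hp =>
    Set.sep_eq_self_iff_mem_true.mpr (hr p hp)
  ext C
  simp only [Set.mem_ofPred_eq, Set.mem_singleton_iff]
  constructor
  · rintro ⟨p, hp, rfl⟩
    exact hclass p hp
  · rintro rfl
    obtain ⟨p, hp⟩ := hS
    exact ⟨p, hp, (hclass p hp).symm⟩

namespace IsPrimitiveRoot

variable {R : Type*} [CommRing R] [NoZeroDivisors R] {ζ : R} {m : ℕ}

theorem pow_half_eq_neg_one (h : IsPrimitiveRoot ζ m) (hm : 0 < m) (hme : Even m) :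
    ζ ^ (m / 2) = -1 := by
  obtain ⟨k, rfl⟩ := hme
  have hk : k ≠ 0 := by omega
  have h2 : IsPrimitiveRoot (ζ ^ k) ((k + k) / k) := h.pow_of_dvd hk (Dvd.intro 2 (by ring))
  rw [← two_mul, Nat.mul_div_cancel _ (Nat.pos_of_ne_zero hk)] at h2
  rw [show (k + k) / 2 = k by omega]
  exact h2.eq_neg_one_of_two_right

theorem exists_pow_eq_of_sq_eq_one (h : IsPrimitiveRoot ζ m) (hm : 0 < m) (hme : Even m)
    {x : R} (hx : x ^ 2 = 1) : ∃ f < m, m ∣ 2 * f ∧ ζ ^ f = x := by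
  rcases sq_eq_one_iff.mp hx with rfl | rfl
  · exact ⟨0, hm, dvd_zero m, pow_zero ζ⟩
  · exact ⟨m / 2, by omega, ⟨1, by have := hme.two_dvd; omega⟩, h.pow_half_eq_neg_one hm hme⟩

end IsPrimitiveRoot

section taft

variable {n : ℕ}

theorem sq_eq_one_of_pow_gcd_sub_two_eq_one {M : Type*} [Monoid M] (hn : 2 ≤ n) {x : M}
    (hx : x ^ Nat.gcd n (n - 2) = 1) : x ^ 2 = 1 := by
  rw [Nat.gcd_self_sub_right hn, pow_gcd_eq_one] at hx
  exact hx.2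

theorem eq_one_of_pow_gcd_sub_two_eq_one {M : Type*} [Monoid M] (hn : 2 ≤ n) (hodd : Odd n)
    {x : M} (hx : x ^ Nat.gcd n (n - 2) = 1) : x = 1 := by
  rwa [Nat.gcd_self_sub_right hn, Nat.coprime_two_right.mpr hodd, pow_one] at hx

variable {m : ℕ}

theorem exists_pow_eq_mul_of_pow_gcd_sub_two_eq_one {R : Type*} [CommRing R] [NoZeroDivisors R]
    {q : R} (hq : IsPrimitiveRoot q m) (hm : 0 < m)
    (hme : Even m) (hn : 2 ≤ n) {σ σ' : R} (hσ : σ ^ Nat.gcd n (n - 2) = 1)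
    (hσ' : σ' ^ Nat.gcd n (n - 2) = 1) :
    ∃ F < m, m ∣ n * F ∧ m ∣ 2 * F ∧ q ^ F = σ * σ' := by
  rcases Nat.even_or_odd n with ⟨k, rfl⟩ | hodd
  · have hsq : (σ * σ') ^ 2 = 1 := by
      rw [mul_pow, sq_eq_one_of_pow_gcd_sub_two_eq_one hn hσ,
        sq_eq_one_of_pow_gcd_sub_two_eq_one hn hσ', one_mul]
    obtain ⟨F, hFm, h2F, hqF⟩ := hq.exists_pow_eq_of_sq_eq_one hm hme hsq
    refine ⟨F, hFm, ?_, h2F, hqF⟩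
    rw [← two_mul, mul_comm 2, mul_assoc]
    exact h2F.mul_left k
  · rw [eq_one_of_pow_gcd_sub_two_eq_one hn hodd hσ, eq_one_of_pow_gcd_sub_two_eq_one hn hodd hσ',
      one_mul]
    exact ⟨0, hm, dvd_zero m, dvd_zero m, pow_zero q⟩

theorem taftRel_of_mem_taftSet {K : Type*} [Field K] {q : K} (hq : IsPrimitiveRoot q m) (hm : 0 < m) (hme : Even m)
    (hn : 2 ≤ n) {p p' : K × K} (hp : p ∈ taftSet K n) (hp' : p' ∈ taftSet K n) :
    taftRel m n q p p' := by
  have hββ' : (p.1 * p'.1) ^ 2 = 1 := by rw [mul_pow, hp.1, hp'.1, one_mul]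
  obtain ⟨f, hfm, h2f, hqf⟩ := hq.exists_pow_eq_of_sq_eq_one hm hme hββ'
  obtain ⟨F, hFm, hnF, h2F, hqF⟩ :=
    exists_pow_eq_mul_of_pow_gcd_sub_two_eq_one hq hm hme hn hp.2 hp'.2
  exact ⟨f, F, 0, 1, by omega, by omega, by omega, by omega, Nat.gcd_one_left n, h2f, hnF, h2F,
    by rw [hqf, pow_zero, mul_one], by rw [hqF, pow_one]⟩

end taft

/-- If `m` is even then any two pairs in `taftSet K n` are related under `~`; consequently
`~` has exactly one equivalence class, regardless of the parity of `n`. -/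
theorem taftRel_even_m_single_class {K : Type*} [Field K] (m n : ℕ)
    (hm : 2 ≤ m) (hn : 3 ≤ n) (q : K) (hq : IsPrimitiveRoot q m) (hme : Even m) :
    (∀ p ∈ taftSet K n, ∀ p' ∈ taftSet K n, taftRel m n q p p') ∧
    {C : Set (K × K) | ∃ p ∈ taftSet K n,
      C = {p' ∈ taftSet K n | taftRel m n q p p'}} = {taftSet K n} := by
  have hrel : ∀ p ∈ taftSet K n, ∀ p' ∈ taftSet K n, taftRel m n q p p' :=
    fun _ hp _ hp' => taftRel_of_mem_taftSet hq (by omega) hme (by omega) hp hp'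
  have hne : (taftSet K n).Nonempty := ⟨(1, 1), one_pow 2, one_pow _⟩
  exact ⟨hrel, Set.setOf_exists_eq_sep_eq_singleton hne hrel⟩
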